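/- For a finite semigroup S the following are equivalent: (1) S satisfies (x y)^ω = y^ω (x y)^ω for all x, y ∈ S; (2) S satisfies (x y z)^ω = y^ω (x y z)^ω for all x, y, z ∈ S; (3) S satisfies (x y)^ω = (y x)^ω (x y)^ω for all x, y ∈ S. -/
import Mathlib


namespace WordEq

variable {C X S : Type*}

/-- `spow u n = u^(n+1)` : positive powers in a semigroup. -/
def spow [Mul S] (u : S) : ℕ → S
  | 0 => u
  | n + 1 => spow u n * u

/-- `e` is the ω-power of `u`, i.e. the (unique) idempotent among the
positive powers `u, u², u³, …` of `u`. -/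
def IsOmega [Mul S] (u e : S) : Prop := (∃ n : ℕ, spow u n = e) ∧ e * e = e

/-- Extension of a substitution `σ : 𝒳 → Σ⁺` to words over `Ω = Σ ⊎ 𝒳`,
fixing the constants. -/
def subst (σ : X → List C) (w : List (C ⊕ X)) : List C :=
  w.flatMap (Sum.elim (fun a => [a]) σ)

/-- `p^k` occurs as a factor of `w`. -/
def hasPowFactor (w p : List C) (k : ℕ) : Prop :=
  ∃ u v : List C, w = u ++ (List.replicate k p).flatten ++ v

/-- The exponent of periodicity of a word: the largest `k` such that `p^k`
is a factor of `w` for some nonempty `p`. -/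
noncomputable def expWord (w : List C) : ℕ :=
  sSup {k : ℕ | ∃ p : List C, p ≠ [] ∧ hasPowFactor w p k}

/-- The exponent of periodicity of a substitution. -/
noncomputable def expSub [Fintype X] (σ : X → List C) : ℕ :=
  Finset.univ.sup fun x : X => expWord (σ x)

/-- `μ` is (the restriction to nonempty words of) a semigroup homomorphism
`Ω⁺ → S`. -/
def IsConstraint [Mul S] (μ : List (C ⊕ X) → S) : Prop :=
  ∀ u v : List (C ⊕ X), u ≠ [] → v ≠ [] → μ (u ++ v) = μ u * μ v

/-- `σ : 𝒳 → Σ⁺` is a solution of the word equation `U = V`. -/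
def IsSolution (U V : List (C ⊕ X)) (σ : X → List C) : Prop :=
  (∀ x : X, σ x ≠ []) ∧ subst σ U = subst σ V

/-- `σ` is a solution of the word equation `U = V` with constraint `μ`. -/
def IsSolutionC [Mul S] (U V : List (C ⊕ X)) (μ : List (C ⊕ X) → S)
    (σ : X → List C) : Prop :=
  IsSolution U V σ ∧ ∀ x : X, μ ((σ x).map Sum.inl) = μ [Sum.inr x]

/-- Each variable occurs at most twice in `UV`. -/
def Quadratic [DecidableEq C] [DecidableEq X] (U V : List (C ⊕ X)) : Prop :=
  ∀ x : X, (U ++ V).count (Sum.inr x) ≤ 2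



section Aux

variable {S : Type*} [Semigroup S]

lemma spow_zero (u : S) : spow u 0 = u := rfl

lemma spow_succ (u : S) (n : ℕ) : spow u (n + 1) = spow u n * u := rfl

lemma mul_spow (u : S) (n : ℕ) : u * spow u n = spow u n * u := by
  induction n with
  | zero => rfl
  | succ n ih => rw [spow_succ, ← mul_assoc, ih]

lemma spow_succ' (u : S) (n : ℕ) : spow u (n + 1) = u * spow u n := by
  rw [spow_succ, ← mul_spow]

lemma spow_succ2 (u : S) (n : ℕ) : spow u (n + 2) = u * spow u (n + 1) :=
  spow_succ' u (n + 1)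

lemma spow_add (u : S) (m n : ℕ) : spow u (m + n + 1) = spow u m * spow u n := by
  induction n with
  | zero => simp [spow_succ, spow_zero]
  | succ n ih =>
      rw [show m + (n + 1) + 1 = (m + n + 1) + 1 from by omega, spow_succ, ih,
        spow_succ, mul_assoc]

lemma spow_conj (u v : S) (n : ℕ) :
    spow (u * v) (n + 1) = u * spow (v * u) n * v := by
  induction n with
  | zero =>
      show u * v * (u * v) = u * (v * u) * v
      simp only [mul_assoc]
  | succ n ih =>
      rw [spow_succ' (u * v) (n + 1), ih, spow_succ' (v * u) n]
      simp only [mul_assoc]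

lemma spow_conj2 (u v : S) (n : ℕ) :
    spow (u * v) (n + 2) = u * spow (v * u) (n + 1) * v :=
  spow_conj u v (n + 1)

lemma spow_idem {e : S} (h : e * e = e) (n : ℕ) : spow e n = e := by
  induction n with
  | zero => rfl
  | succ n ih => rw [spow_succ, ih, h]

lemma spow_spow (u : S) (k m : ℕ) :
    spow (spow u k) m = spow u (k + m + k * m) := by
  induction m with
  | zero => simp [spow_zero]
  | succ m ih =>
      rw [spow_succ, ih, show k + (m + 1) + k * (m + 1) = (k + m + k * m) + k + 1 from by ring,
        spow_add]

lemma exists_good [Finite S] (u : S) :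
    ∃ n : ℕ, ∀ m : ℕ, (n + 1) ∣ (m + 1) → spow u m = spow u n := by
  obtain ⟨i, j, hij, heq⟩ : ∃ i j : ℕ, i < j ∧ spow u i = spow u j := by
    obtain ⟨a, b, hne, he⟩ := Finite.exists_ne_map_eq_of_infinite (fun n => spow u n)
    rcases lt_or_gt_of_ne hne with h | h
    · exact ⟨a, b, h, he⟩
    · exact ⟨b, a, h, he.symm⟩
  obtain ⟨p', hp⟩ : ∃ p', j = i + (p' + 1) := ⟨j - i - 1, by omega⟩
  subst hp
  have step : ∀ c, spow u (i + c) = spow u (i + (p' + 1) + c) := by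
    intro c
    induction c with
    | zero => simpa using heq
    | succ c ih =>
        rw [show i + (c + 1) = (i + c) + 1 from by omega,
          show i + (p' + 1) + (c + 1) = (i + (p' + 1) + c) + 1 from by omega,
          spow_succ, spow_succ, ih]
  have per : ∀ c q : ℕ, spow u (i + c + q * (p' + 1)) = spow u (i + c) := by
    intro c q
    induction q with
    | zero => simp
    | succ q ih =>
        rw [show i + c + (q + 1) * (p' + 1) = i + (p' + 1) + (c + q * (p' + 1)) from by ring,
          ← step (c + q * (p' + 1)), ← add_assoc]
        exact ih
  refine ⟨i * (p' + 1) + p', fun m hdvd => ?_⟩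
  obtain ⟨k, hk⟩ := hdvd
  rcases k with _ | k'
  · rw [Nat.mul_zero] at hk; omega
  · have h2 : i + (i * p' + p') + (i + 1) * k' * (p' + 1) + 1
        = (i * (p' + 1) + p' + 1) * (k' + 1) := by ring
    have hm : m = i + (i * p' + p') + (i + 1) * k' * (p' + 1) :=
      Nat.add_right_cancel (hk.trans h2.symm)
    rw [hm, per (i * p' + p') ((i + 1) * k'),
      show i + (i * p' + p') = i * (p' + 1) + p' from by ring]

lemma master (S : Type*) [Semigroup S] [Finite S] :
    ∃ N : ℕ, 2 ≤ N ∧ (∀ u : S, spow u N * spow u N = spow u N) ∧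
      ∀ (u : S) (k : ℕ), spow (spow u k) N = spow u N := by
  cases nonempty_fintype S
  choose n hn using fun u : S => exists_good u
  have hpos : (∏ u : S, (n u + 1)) ≠ 0 :=
    Finset.prod_ne_zero_iff.mpr fun u _ => Nat.succ_ne_zero _
  obtain ⟨L', hL⟩ : ∃ L', (∏ u : S, (n u + 1)) = L' + 1 :=
    ⟨(∏ u : S, (n u + 1)) - 1, by omega⟩
  have hdvd : ∀ u : S, (n u + 1) ∣ (L' + 1) := by
    intro u
    rw [← hL]
    exact Finset.dvd_prod_of_mem _ (Finset.mem_univ u)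
  have hdvdN : ∀ u : S, (n u + 1) ∣ (3 * L' + 2 + 1) := by
    intro u
    rw [show 3 * L' + 2 + 1 = 3 * (L' + 1) from by ring]
    exact Dvd.dvd.mul_left (hdvd u) 3
  have key : ∀ (u : S) (m : ℕ), (n u + 1) ∣ (m + 1) → spow u m = spow u (3 * L' + 2) := by
    intro u m hm
    rw [hn u m hm, ← hn u (3 * L' + 2) (hdvdN u)]
  refine ⟨3 * L' + 2, by omega, ?_, ?_⟩
  · intro u
    rw [← spow_add]
    refine key u ((3 * L' + 2) + (3 * L' + 2) + 1) ?_
    rw [show (3 * L' + 2) + (3 * L' + 2) + 1 + 1 = 2 * (3 * L' + 2 + 1) from by ring]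
    exact Dvd.dvd.mul_left (hdvdN u) 2
  · intro u k
    rw [spow_spow]
    refine key u (k + (3 * L' + 2) + k * (3 * L' + 2)) ?_
    rw [show k + (3 * L' + 2) + k * (3 * L' + 2) + 1 = (k + 1) * (3 * L' + 2 + 1) from by ring]
    exact Dvd.dvd.mul_left (hdvdN u) (k + 1)

lemma omega_unique {N : ℕ}
    (hpw : ∀ (u : S) (k : ℕ), spow (spow u k) N = spow u N)
    {u e : S} (h : IsOmega u e) : e = spow u N := by
  obtain ⟨⟨m, hm⟩, hi⟩ := h
  calc e = spow e N := (spow_idem hi N).symm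
    _ = spow (spow u m) N := by rw [hm]
    _ = spow u N := hpw u m

end Aux

section Core

variable {S : Type*} [Semigroup S]

lemma r1 {N : ℕ}
    (hC : ∀ x y : S, spow (x * y) N = spow (y * x) N * spow (x * y) N)
    {F a b : S} (hF : F * F = F) (hab : F = a * b) :
    spow (b * a) N * F = F := by
  have h := hC a b
  rw [← hab, spow_idem hF] at h
  exact h.symm

lemma fl {N : ℕ} (hN : 2 ≤ N)
    (hC : ∀ x y : S, spow (x * y) N = spow (y * x) N * spow (x * y) N)
    {F y : S} (hF : F * F = F) (hidy : spow y N * spow y N = spow y N)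
    {a c : S} (h0 : F = a * y * c) :
    spow y N * F = F := by
  obtain ⟨m, rfl⟩ : ∃ m, N = m + 2 := ⟨N - 2, by omega⟩
  have main : ∀ j : ℕ, ∃ a c : S, F = a * spow y j * c := by
    intro j
    induction j with
    | zero => exact ⟨a, c, h0⟩
    | succ j ih =>
      obtain ⟨a, c, h⟩ := ih
      have h1 : spow (spow y j * (c * a)) (m + 2) * F = F := by
        have h' : F = a * (spow y j * c) := by rw [h, mul_assoc]
        have := r1 hC hF h'
        rwa [mul_assoc] at this
      set t := c * a * spow (spow y j * (c * a)) (m + 1) * F with ht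
      have h2 : F = spow y j * t := by
        rw [ht]
        conv_lhs => rw [← h1]
        rw [spow_succ2 (spow y j * (c * a)) m]
        simp only [mul_assoc]
      obtain ⟨s, hs⟩ : ∃ s : S, F = y * s := by
        cases j with
        | zero => exact ⟨t, h2⟩
        | succ i => exact ⟨spow y i * t, by rw [h2, spow_succ', mul_assoc]⟩
      have hyF : y * F = spow y (j + 1) * t := by
        rw [h2, ← mul_assoc, ← spow_succ']
      have hE : spow (s * y) (m + 2) = s * F * y := by
        rw [spow_conj2, ← hs, spow_idem hF]
      have h3 : spow (s * y) (m + 2) * F = F := r1 hC hF hs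
      have h4 : spow (F * spow (s * y) (m + 2)) (m + 2) * F = F :=
        r1 hC hF h3.symm
      set W := F * (s * F) with hW
      have h5 : F * spow (s * y) (m + 2) = W * y := by
        rw [hE, hW]
        simp only [mul_assoc]
      have hyW : y * W = spow y (j + 1) * t * (s * F) := by
        rw [hW, ← mul_assoc, hyF]
      refine ⟨W, t * (s * (F * (spow (spow y (j + 1) * (t * (s * F))) m * (y * F)))), ?_⟩
      conv_lhs => rw [← h4, h5]
      rw [spow_conj2 W y m, spow_succ' (y * W) m, hyW]
      simp only [mul_assoc]
  obtain ⟨a', c', hm2⟩ := main (m + 2)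
  have h6 : spow (spow y (m + 2) * (c' * a')) (m + 2) * F = F := by
    have h' : F = a' * (spow y (m + 2) * c') := by rw [hm2, mul_assoc]
    have := r1 hC hF h'
    rwa [mul_assoc] at this
  have hQ : spow y (m + 2) * spow (spow y (m + 2) * (c' * a')) (m + 2)
      = spow (spow y (m + 2) * (c' * a')) (m + 2) := by
    conv_lhs => rw [spow_succ2 (spow y (m + 2) * (c' * a')) m]
    rw [← mul_assoc, ← mul_assoc, hidy, ← spow_succ2]
  calc spow y (m + 2) * F
      = spow y (m + 2) * (spow (spow y (m + 2) * (c' * a')) (m + 2) * F) := by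
        conv_lhs => rw [← h6]
    _ = spow y (m + 2) * spow (spow y (m + 2) * (c' * a')) (m + 2) * F :=
        (mul_assoc _ _ _).symm
    _ = spow (spow y (m + 2) * (c' * a')) (m + 2) * F := by rw [hQ]
    _ = F := h6

lemma prefix_law {N : ℕ} (hN : 2 ≤ N)
    (hid : ∀ u : S, spow u N * spow u N = spow u N)
    (hA : ∀ x y : S, spow (x * y) N = spow y N * spow (x * y) N)
    (y z : S) : spow y N * spow (y * z) N = spow (y * z) N := by
  obtain ⟨m, rfl⟩ : ∃ m, N = m + 2 := ⟨N - 2, by omega⟩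
  have hf : spow (z * y) (m + 2) = spow y (m + 2) * spow (z * y) (m + 2) := hA z y
  have he : spow (y * z) (m + 2)
      = y * (spow (z * y) (m + 2) * spow (z * y) (m + 1)) * z := by
    calc spow (y * z) (m + 2)
        = spow (y * z) (m + 2) * spow (y * z) (m + 2) := (hid _).symm
      _ = spow (y * z) ((m + 2) + (m + 2) + 1) := (spow_add _ _ _).symm
      _ = y * spow (z * y) ((m + 2) + (m + 2)) * z := spow_conj y z _
      _ = y * spow (z * y) ((m + 2) + (m + 1) + 1) * z := by
            rw [show (m + 2) + (m + 2) = (m + 2) + (m + 1) + 1 from by omega]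
      _ = y * (spow (z * y) (m + 2) * spow (z * y) (m + 1)) * z := by rw [spow_add]
  calc spow y (m + 2) * spow (y * z) (m + 2)
      = spow y (m + 2) * (y * (spow (z * y) (m + 2) * spow (z * y) (m + 1)) * z) := by
        rw [he]
    _ = spow y (m + 2) * y * ((spow (z * y) (m + 2) * spow (z * y) (m + 1)) * z) := by
        simp only [mul_assoc]
    _ = y * spow y (m + 2) * ((spow (z * y) (m + 2) * spow (z * y) (m + 1)) * z) := by
        rw [← mul_spow]
    _ = y * (spow y (m + 2) * spow (z * y) (m + 2) * (spow (z * y) (m + 1) * z)) := by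
        simp only [mul_assoc]
    _ = y * (spow (z * y) (m + 2) * (spow (z * y) (m + 1) * z)) := by rw [← hf]
    _ = y * (spow (z * y) (m + 2) * spow (z * y) (m + 1)) * z := by
        simp only [mul_assoc]
    _ = spow (y * z) (m + 2) := he.symm

lemma AtoB {N : ℕ} (hN : 2 ≤ N)
    (hid : ∀ u : S, spow u N * spow u N = spow u N)
    (hA : ∀ x y : S, spow (x * y) N = spow y N * spow (x * y) N)
    (x y z : S) : spow (x * y * z) N = spow y N * spow (x * y * z) N := by
  have h1 : spow (x * y * z) N = spow (y * z) N * spow (x * y * z) N := by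
    have := hA x (y * z)
    rwa [← mul_assoc] at this
  calc spow (x * y * z) N = spow (y * z) N * spow (x * y * z) N := h1
    _ = (spow y N * spow (y * z) N) * spow (x * y * z) N := by
        rw [prefix_law hN hid hA y z]
    _ = spow y N * (spow (y * z) N * spow (x * y * z) N) := by rw [mul_assoc]
    _ = spow y N * spow (x * y * z) N := by rw [← h1]

lemma BtoA {N : ℕ}
    (hpw : ∀ (u : S) (k : ℕ), spow (spow u k) N = spow u N)
    (hB : ∀ x y z : S, spow (x * y * z) N = spow y N * spow (x * y * z) N)
    (x y : S) : spow (x * y) N = spow y N * spow (x * y) N := by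
  have h := hB x y (x * y)
  have h2 : x * y * (x * y) = spow (x * y) 1 := rfl
  rw [h2, hpw] at h
  exact h

lemma BtoC {N : ℕ}
    (hpw : ∀ (u : S) (k : ℕ), spow (spow u k) N = spow u N)
    (hB : ∀ x y z : S, spow (x * y * z) N = spow y N * spow (x * y * z) N)
    (x y : S) : spow (x * y) N = spow (y * x) N * spow (x * y) N := by
  have h := hB x (y * x) y
  have h2 : x * (y * x) * y = spow (x * y) 1 := by
    show x * (y * x) * y = x * y * (x * y)
    simp only [mul_assoc]
  rw [h2, hpw] at h
  exact h

lemma CtoA {N : ℕ} (hN : 2 ≤ N)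
    (hid : ∀ u : S, spow u N * spow u N = spow u N)
    (hC : ∀ x y : S, spow (x * y) N = spow (y * x) N * spow (x * y) N)
    (x y : S) : spow (x * y) N = spow y N * spow (x * y) N := by
  obtain ⟨m, hm⟩ : ∃ m, N = m + 1 := ⟨N - 1, by omega⟩
  have h0 : spow (x * y) N = x * y * spow (x * y) m := by
    rw [hm, spow_succ']
  exact (fl hN hC (hid (x * y)) (hid y) h0).symm

end Core

/-- For a finite semigroup `S` the following identities are
equivalent:
(1) `(xy)^ω = y^ω (xy)^ω`;
(2) `(xyz)^ω = y^ω (xyz)^ω`;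
(3) `(xy)^ω = (yx)^ω (xy)^ω`. -/
theorem stmt12 (S : Type) [Semigroup S] [Finite S] :
    ((∀ x y e f : S, IsOmega (x * y) e → IsOmega y f → e = f * e) ↔
      (∀ x y z e f : S, IsOmega (x * y * z) e → IsOmega y f → e = f * e)) ∧
    ((∀ x y e f : S, IsOmega (x * y) e → IsOmega y f → e = f * e) ↔
      (∀ x y e f : S, IsOmega (x * y) e → IsOmega (y * x) f → e = f * e)) := by
  obtain ⟨N, hN, hid, hpw⟩ := master S
  have uniq : ∀ {u e : S}, IsOmega u e → e = spow u N := fun h => omega_unique hpw h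
  have mk : ∀ u : S, IsOmega u (spow u N) := fun u => ⟨⟨N, rfl⟩, hid u⟩
  constructor
  · constructor
    · intro h x y z e f he hf
      have hA : ∀ a b : S, spow (a * b) N = spow b N * spow (a * b) N :=
        fun a b => h a b _ _ (mk _) (mk _)
      rw [uniq he, uniq hf]
      exact AtoB hN hid hA x y z
    · intro h x y e f he hf
      have hB : ∀ a b c : S, spow (a * b * c) N = spow b N * spow (a * b * c) N :=
        fun a b c => h a b c _ _ (mk _) (mk _)
      rw [uniq he, uniq hf]
      exact BtoA hpw hB x y
  · constructor
    · intro h x y e f he hf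
      have hA : ∀ a b : S, spow (a * b) N = spow b N * spow (a * b) N :=
        fun a b => h a b _ _ (mk _) (mk _)
      rw [uniq he, uniq hf]
      exact BtoC hpw (fun a b c => AtoB hN hid hA a b c) x y
    · intro h x y e f he hf
      have hC : ∀ a b : S, spow (a * b) N = spow (b * a) N * spow (a * b) N :=
        fun a b => h a b _ _ (mk _) (mk _)
      rw [uniq he, uniq hf]
      exact CtoA hN hid hC x y

end WordEq
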